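/- arXiv:1302.7053 — 2 statements merged into one kernel-verified Lean document; each statement's English description precedes it below -/
import Mathlib

section
/- Let A be a finitely generated abelian group and W a finite group acting on A, and let G = A ⋊ W be the semidirect product. Then every irreducible complex representation of G is finite-dimensional, of dimension at most |W|. -/
/-!
The group `A ⋊ W` is countable, so Dixmier's version of Schur's lemma applies: an endomorphism `T`
commuting with an irreducible representation of a countable group over `ℂ` is a scalar, since
otherwise the vectors `(T - c)⁻¹ v`, `c ∈ ℂ`, would be uncountably many linearly independent
vectors in a space of countable dimension. The coefficients of `∏ w : W, (X - w • a)` over `ℂ[A]`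
are `W`-invariant, hence central in `ℂ[A ⋊ W]`, so they act by scalars and every `ρ a` is
algebraic over `ℂ`. Commuting algebraic operators have a common eigenvector `v` for the finitely
many generators of `A`, so `A` preserves the line `ℂ v`, and the `|W|` vectors `ρ w v` span an
invariant subspace, which must be all of `V`.
-/

open Polynomial Cardinal

namespace Module.End

variable {K V : Type*} [Field K] [AddCommGroup V] [Module K V]

theorem exists_mem_ne_zero_apply_eq_smul_of_aeval_apply_eq_zero [IsAlgClosed K]
    {f : End K V} {U : Submodule K V} (hU : ∀ v ∈ U, f v ∈ U) {p : K[X]} (hp : p ≠ 0)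
    {v : V} (hvU : v ∈ U) (hv : v ≠ 0) (hpv : aeval f p v = 0) :
    ∃ μ : K, ∃ w ∈ U, w ≠ 0 ∧ f w = μ • w := by
  by_contra! h
  let StableInjOn (g : End K V) : Prop := (∀ x ∈ U, g x ∈ U) ∧ ∀ x ∈ U, g x = 0 → x = 0
  have hmul : ∀ g₁ g₂, StableInjOn g₁ → StableInjOn g₂ → StableInjOn (g₁ * g₂) := fun g₁ g₂ h₁ h₂ =>
    ⟨fun x hx => h₁.1 _ (h₂.1 x hx), fun x hx hx0 => h₂.2 x hx (h₁.2 _ (h₂.1 x hx) hx0)⟩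
  have hfactor : ∀ μ : K, StableInjOn (f - μ • 1) := fun μ =>
    ⟨fun x hx => U.sub_mem (hU x hx) (U.smul_mem μ hx), fun x hx hx0 => by
      by_contra hx'
      exact h μ x hx hx' (sub_eq_zero.mp (by simpa using hx0))⟩
  have hlead : StableInjOn (p.leadingCoeff • 1) :=
    ⟨fun x hx => U.smul_mem _ hx, fun x _ hx0 => by
      simpa [leadingCoeff_ne_zero.mpr hp] using hx0⟩
  have hroots : ∀ s : Multiset K, StableInjOn (aeval f (s.map (X - C ·)).prod) := by
    intro s
    induction s using Multiset.induction_on with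
    | empty => exact ⟨fun x hx => by simpa using hx, fun x _ hx => by simpa using hx⟩
    | cons μ s ih =>
      rw [Multiset.map_cons, Multiset.prod_cons, map_mul]
      exact hmul _ _ (by simpa [Algebra.algebraMap_eq_smul_one] using hfactor μ) ih
  have hgood : StableInjOn (aeval f p) := by
    -- over an algebraically closed field `p(f)` is a nonzero multiple of `∏ (f - μ)` over roots `μ`
    rw [← C_leadingCoeff_mul_prod_multiset_X_sub_C (IsAlgClosed.card_roots_eq_natDegree (p := p)),
      map_mul, aeval_C, Algebra.algebraMap_eq_smul_one]
    exact hmul _ _ hlead (hroots _)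
  exact hv (hgood.2 v hvU hpv)

theorem exists_mem_ne_zero_apply_eq_smul_of_isIntegral [IsAlgClosed K] {f : End K V}
    (hf : IsIntegral K f) {U : Submodule K V} (hU : ∀ v ∈ U, f v ∈ U) (hU0 : U ≠ ⊥) :
    ∃ μ : K, ∃ w ∈ U, w ≠ 0 ∧ f w = μ • w := by
  obtain ⟨p, hp, hpf⟩ := hf
  obtain ⟨v, hvU, hv⟩ := U.exists_mem_ne_zero_of_ne_bot hU0
  refine exists_mem_ne_zero_apply_eq_smul_of_aeval_apply_eq_zero hU hp.ne_zero hvU hv ?_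
  rw [aeval_def, hpf, LinearMap.zero_apply]

theorem exists_ne_zero_forall_mem_apply_eq_smul [IsAlgClosed K] [Nontrivial V] {ι : Type*}
    (f : ι → End K V) (hcomm : ∀ i j, Commute (f i) (f j)) (hf : ∀ i, IsIntegral K (f i))
    (s : Finset ι) : ∃ v ≠ 0, ∀ i ∈ s, ∃ μ : K, f i v = μ • v := by
  classical
  suffices ∃ U : Submodule K V, U ≠ ⊥ ∧ (∀ i, ∀ v ∈ U, f i v ∈ U) ∧
      ∀ i ∈ s, ∃ μ : K, ∀ v ∈ U, f i v = μ • v by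
    obtain ⟨U, hU0, -, hUs⟩ := this
    obtain ⟨v, hvU, hv⟩ := U.exists_mem_ne_zero_of_ne_bot hU0
    exact ⟨v, hv, fun i hi => (hUs i hi).imp fun μ hμ => hμ v hvU⟩
  induction s using Finset.induction_on with
  | empty => exact ⟨⊤, top_ne_bot, fun _ _ _ => trivial, by simp⟩
  | insert j s _ ih =>
    obtain ⟨U, hU0, hU, hUs⟩ := ih
    obtain ⟨μ, w, hwU, hw, hfw⟩ :=
      exists_mem_ne_zero_apply_eq_smul_of_isIntegral (hf j) (hU j) hU0
    have hE : ∀ i, ∀ v ∈ (f j).eigenspace μ, f i v ∈ (f j).eigenspace μ := fun i v hv => by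
      rw [mem_eigenspace_iff] at hv ⊢
      rw [← Module.End.mul_apply, ← (hcomm i j).eq, Module.End.mul_apply, hv, map_smul]
    refine ⟨U ⊓ (f j).eigenspace μ, ?_, fun i v hv => ⟨hU i v hv.1, hE i v hv.2⟩, ?_⟩
    · exact (Submodule.ne_bot_iff _).mpr ⟨w, ⟨hwU, mem_eigenspace_iff.mpr hfw⟩, hw⟩
    · simp only [Finset.mem_insert, forall_eq_or_imp]
      exact ⟨⟨μ, fun v hv => mem_eigenspace_iff.mp hv.2⟩,
        fun i hi => (hUs i hi).imp fun ν hν v hv => hν v hv.1⟩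

theorem linearIndependent_of_sub_smul_one_apply_eq {f : End K V} {v : V}
    (hv : ∀ p : K[X], aeval f p v = 0 → p = 0) {u : K → V}
    (hu : ∀ μ : K, (f - μ • 1) (u μ) = v) : LinearIndependent K u := by
  classical
  refine linearIndependent_iff'.2 fun s m hm i hi => ?_
  have hprod : ∀ j ∈ s,
      aeval f (∏ l ∈ s, (X - C l)) (u j) = aeval f (∏ l ∈ s.erase j, (X - C l)) v := by
    intro j hj
    rw [← Finset.prod_erase_mul _ _ hj, map_mul, Module.End.mul_apply]
    simp [Algebra.algebraMap_eq_smul_one, ← hu j]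
  -- applying `∏ l ∈ s, (f - l)` to the relation gives a polynomial `q` with `q(f) v = 0`
  set q : K[X] := ∑ j ∈ s, C (m j) * ∏ l ∈ s.erase j, (X - C l)
  have hq : q = 0 := by
    refine hv q ?_
    have := congrArg (aeval f (∏ l ∈ s, (X - C l))) hm
    simp only [map_sum, map_smul, map_zero] at this
    rw [← this]
    simp only [q, map_sum, map_mul, aeval_C, LinearMap.sum_apply]
    refine Finset.sum_congr rfl fun j hj => ?_
    rw [hprod j hj, Module.End.mul_apply, Algebra.algebraMap_eq_smul_one]
    simp
  have heval : q.eval i = m i * ∏ l ∈ s.erase i, (i - l) := by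
    simp only [q, eval_finsetSum, eval_mul, eval_C, eval_prod, eval_sub, eval_X]
    refine Finset.sum_eq_single i (fun j hj hji => ?_) (fun h => absurd hi h)
    rw [Finset.prod_eq_zero (Finset.mem_erase.mpr ⟨Ne.symm hji, hi⟩) (sub_self i), mul_zero]
  rw [hq, eval_zero, eq_comm, mul_eq_zero] at heval
  refine heval.resolve_right (Finset.prod_ne_zero_iff.mpr fun l hl => sub_ne_zero.mpr ?_)
  exact (Finset.ne_of_mem_erase hl).symm

end Module.End

theorem isIntegral_of_forall_smul_eq_self_imp_mem_range {R B E W : Type*} [CommRing R]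
    [CommRing B] [Ring E] [Algebra R E] [Group W] [Finite W] [MulSemiringAction W B]
    (ψ : B →+* E) (hψ : ∀ b : B, (∀ w : W, w • b = b) → ψ b ∈ Set.range (algebraMap R E))
    (b : B) : IsIntegral R (ψ b) := by
  have := Fintype.ofFinite W
  obtain ⟨p, hp, -, hp_monic⟩ := lifts_and_natDegree_eq_and_monic
    ((lifts_iff_coeff_lifts _).mpr fun n => by
      rw [coeff_map]; exact hψ _ (MulSemiringAction.smul_coeff_charpoly b n))
    ((MulSemiringAction.monic_charpoly W b).map ψ)
  refine ⟨p, hp_monic, ?_⟩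
  rw [← eval_map, hp, eval_map, eval₂_hom, MulSemiringAction.eval_charpoly, map_zero]

theorem Group.countable_of_fg {G : Type*} [Group G] [Group.FG G] : Countable G := by
  obtain ⟨α, _, f, hf⟩ := Group.fg_iff_exists_freeGroup_hom_surjective_finite.mp ‹_›
  exact hf.countable

namespace Representation

variable {k G V : Type*} [Field k] [Group G] [AddCommGroup V] [Module k V]

theorem isIrreducible_of_forall_eq_bot_or_eq_top [Nontrivial V] (ρ : Representation k G V)
    (h : ∀ p : Submodule k V, (∀ g, p.map (ρ g) ≤ p) → p = ⊥ ∨ p = ⊤) : ρ.IsIrreducible where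
  exists_pair_ne := ⟨⊥, ⊤, fun h => bot_ne_top (congrArg Subrepresentation.toSubmodule h)⟩
  eq_bot_or_eq_top σ := (h σ.toSubmodule fun g => Submodule.map_le_iff_le_comap.mpr
    fun _ hv => σ.apply_mem_toSubmodule g hv).imp
      (fun h => Subrepresentation.toSubmodule_injective h)
      (fun h => Subrepresentation.toSubmodule_injective h)

namespace IsIrreducible

theorem nontrivial (ρ : Representation k G V) [ρ.IsIrreducible] : Nontrivial V := by
  by_contra h
  rw [not_nontrivial_iff_subsingleton] at h
  exact bot_ne_top (α := Subrepresentation ρ) (Subrepresentation.ext (Subsingleton.elim _ _))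

theorem span_eq_top {ρ : Representation k G V} [ρ.IsIrreducible] {s : Set V} {v : V}
    (hvs : v ∈ s) (hv : v ≠ 0) (hs : ∀ g, ∀ w ∈ s, ρ g w ∈ Submodule.span k s) :
    Submodule.span k s = ⊤ := by
  let σ : Subrepresentation ρ := ⟨Submodule.span k s, fun g _ hw =>
    (Submodule.span_le (p := (Submodule.span k s).comap (ρ g))).mpr (hs g) hw⟩
  refine congrArg Subrepresentation.toSubmodule
    ((IsSimpleOrder.eq_bot_or_eq_top σ).resolve_left fun h => hv ?_)
  have hvσ : v ∈ σ.toSubmodule := Submodule.subset_span hvs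
  rw [h] at hvσ
  exact (Submodule.mem_bot k).mp hvσ

theorem rank_le_aleph0 [Countable G] (ρ : Representation k G V) [ρ.IsIrreducible] :
    Module.rank k V ≤ ℵ₀ := by
  have := IsIrreducible.nontrivial ρ
  obtain ⟨v, hv⟩ := exists_ne (0 : V)
  have hspan : Submodule.span k (Set.range fun g => ρ g v) = ⊤ := by
    refine span_eq_top (ρ := ρ) ⟨1, by simp⟩ hv ?_
    rintro g _ ⟨g', rfl⟩
    exact Submodule.subset_span ⟨g * g', by simp⟩
  calc Module.rank k V = Module.rank k (⊤ : Submodule k V) := (rank_top k V).symm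
    _ ≤ #(Set.range fun g => ρ g v) := hspan ▸ rank_span_le _
    _ ≤ ℵ₀ := (Set.countable_range _).le_aleph0

theorem exists_eq_algebraMap_of_countable [IsAlgClosed k] [Uncountable k] [Countable G]
    {ρ : Representation k G V} [ρ.IsIrreducible] (f : IntertwiningMap ρ ρ) :
    ∃ c : k, f = algebraMap k _ c := by
  have := IsIrreducible.nontrivial ρ
  by_cases h : ∃ c : k, ∃ w : V, w ≠ 0 ∧ f w = c • w
  · obtain ⟨c, w, hw, hfw⟩ := h
    refine ⟨c, sub_eq_zero.mp (((bijective_or_eq_zero _).resolve_left fun hbij => hw ?_))⟩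
    exact hbij.injective (by simp [hfw])
  push Not at h
  have hbij : ∀ c : k, Function.Bijective (f.toLinearMap - c • (1 : Module.End k V)) := fun c =>
    ((bijective_or_eq_zero (f - algebraMap k _ c)).resolve_right fun h0 => by
      obtain ⟨w, hw⟩ := exists_ne (0 : V)
      exact h c w hw (sub_eq_zero.mp (by simpa using congrArg (· w) h0)))
  obtain ⟨v, hv⟩ := exists_ne (0 : V)
  choose u hu using fun c => (hbij c).2 v
  have hli := Module.End.linearIndependent_of_sub_smul_one_apply_eq (fun p hp => by
    by_contra hp0
    obtain ⟨c, w, -, hw, hfw⟩ :=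
      Module.End.exists_mem_ne_zero_apply_eq_smul_of_aeval_apply_eq_zero
        (U := ⊤) (fun _ _ => Submodule.mem_top) hp0 Submodule.mem_top hv hp
    exact h c w hw hfw) hu
  exact absurd (mk_le_aleph0_iff.mp <| lift_le_aleph0.mp <|
    hli.cardinal_lift_le_rank.trans (lift_le_aleph0.mpr (rank_le_aleph0 ρ))) not_countable

theorem finiteDimensional_and_finrank_le_index {ρ : Representation k G V} [ρ.IsIrreducible]
    {H : Subgroup G} [H.FiniteIndex] {v : V} (hv : v ≠ 0)
    (hH : ∀ h ∈ H, ∃ c : k, ρ h v = c • v) :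
    FiniteDimensional k V ∧ Module.finrank k V ≤ H.index := by
  have : Fintype (G ⧸ H) := @Fintype.ofFinite _ H.finite_quotient_of_finiteIndex
  set e : G ⧸ H → V := fun q => ρ q.out v
  have hspan : Submodule.span k (Set.range e) = ⊤ := by
    refine span_eq_top (ρ := ρ) ⟨(1 : G), rfl⟩
      ((map_ne_zero_iff _ (ρ.apply_bijective _).injective).mpr hv) ?_
    rintro g _ ⟨q, rfl⟩
    obtain ⟨h, hh⟩ := QuotientGroup.mk_out_eq_mul H (g * q.out)
    obtain ⟨c, hc⟩ := hH _ (inv_mem h.2)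
    have : ρ g (e q) = c • e (g * q.out : G ⧸ H) :=
      calc ρ g (e q) = ρ (g * q.out * h) (ρ (h : G)⁻¹ v) := by
            simp [e, ← Module.End.mul_apply, ← map_mul]
        _ = c • e (g * q.out : G ⧸ H) := by rw [hc, map_smul, ← hh]
    rw [this]
    exact Submodule.smul_mem _ _ (Submodule.subset_span ⟨_, rfl⟩)
  refine ⟨⟨⟨(Set.finite_range e).toFinset, by rw [Set.Finite.coe_toFinset, hspan]⟩⟩, ?_⟩
  calc Module.finrank k V = Module.finrank k (Submodule.span k (Set.range e)) := by
        rw [hspan, finrank_top]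
    _ ≤ Fintype.card (G ⧸ H) := finrank_range_le_card e
    _ = H.index := by rw [H.index_eq_card, Nat.card_eq_fintype_card]

end IsIrreducible

theorem exists_ne_zero_forall_apply_eq_smul [IsAlgClosed k] [Nontrivial V] {A : Type*}
    [CommGroup A] [Group.FG A] (ρ : Representation k A V) (hρ : ∀ a, IsIntegral k (ρ a)) :
    ∃ v ≠ 0, ∀ a, ∃ c : k, ρ a v = c • v := by
  obtain ⟨S, hS⟩ := Group.FG.out (G := A)
  obtain ⟨v, hv, hSv⟩ := Module.End.exists_ne_zero_forall_mem_apply_eq_smul ρ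
    (fun a b => by simp only [Commute, SemiconjBy, ← map_mul, mul_comm]) hρ S
  refine ⟨v, hv, fun a => ?_⟩
  induction (hS ▸ Subgroup.mem_top a : a ∈ Subgroup.closure (S : Set A))
      using Subgroup.closure_induction with
  | mem a ha => exact hSv a ha
  | one => exact ⟨1, by simp⟩
  | mul a b _ _ ha hb =>
    obtain ⟨c, hc⟩ := ha
    obtain ⟨d, hd⟩ := hb
    exact ⟨c * d, by rw [map_mul, Module.End.mul_apply, hd, map_smul, hc, smul_smul, mul_comm]⟩
  | inv a _ ha =>
    obtain ⟨c, hc⟩ := ha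
    have hc0 : c ≠ 0 := by
      rintro rfl
      exact hv (by simpa [hc] using (ρ.inv_self_apply a v).symm)
    refine ⟨c⁻¹, ?_⟩
    rw [eq_inv_smul_iff₀ hc0, ← map_smul, ← hc, inv_self_apply]

end Representation

namespace SemidirectProduct

variable {A W : Type*} [CommGroup A] [Group W] {φ : W →* MulAut A}

theorem mul_inl_mul_inv (g : A ⋊[φ] W) (a : A) : g * inl a * g⁻¹ = inl (φ g.right a) := by
  ext <;> simp [mul_comm]

end SemidirectProduct

namespace Representation

open SemidirectProduct

variable {k A W V : Type*} [Field k] [CommGroup A] [Group W] {φ : W →* MulAut A}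
  [AddCommGroup V] [Module k V]

theorem mul_asAlgebraHom_comp_inl_mul_inv (ρ : Representation k (A ⋊[φ] W) V)
    (g : A ⋊[φ] W) (b : MonoidAlgebra k A) :
    ρ g * asAlgebraHom (ρ.comp inl) b * ρ g⁻¹ =
      asAlgebraHom (ρ.comp inl) (MonoidAlgebra.domCongr k k (φ g.right) b) := by
  induction b using MonoidAlgebra.induction_linear with
  | zero => simp
  | add b₁ b₂ h₁ h₂ => simp [mul_add, add_mul, h₁, h₂]
  | single a c => simp [← map_mul, mul_inl_mul_inv]

theorem isIntegral_apply_inl [IsAlgClosed k] [Uncountable k] [Finite W]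
    [Countable (A ⋊[φ] W)] (ρ : Representation k (A ⋊[φ] W) V) [ρ.IsIrreducible] (a : A) :
    IsIntegral k (ρ (inl a)) := by
  let : MulSemiringAction W (MonoidAlgebra k A) :=
    MulSemiringAction.compHom _ ((MonoidAlgebra.domCongrAut (R := k) (A := k)).comp φ)
  set ψ := asAlgebraHom (ρ.comp inl)
  have hψ : ∀ b, (∀ w : W, w • b = b) → ψ b ∈ Set.range (algebraMap k (Module.End k V)) := by
    intro b hb
    have hcomm : ∀ g, ψ b * ρ g = ρ g * ψ b := fun g => by
      have h := mul_asAlgebraHom_comp_inl_mul_inv ρ g b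
      rw [show MonoidAlgebra.domCongr k k (φ g.right) b = b from hb g.right] at h
      nth_rewrite 1 [← h]
      rw [mul_assoc, ← map_mul, inv_mul_cancel, map_one, mul_one]
    obtain ⟨c, hc⟩ := IsIrreducible.exists_eq_algebraMap_of_countable
      ((ψ b).intertwiningMap_of_isIntertwiningMap ρ ρ fun g v => congrArg (· v) (hcomm g))
    refine ⟨c, ?_⟩
    rw [Algebra.algebraMap_eq_smul_one]
    exact (congrArg IntertwiningMap.toLinearMap hc).symm
  simpa [ψ] using isIntegral_of_forall_smul_eq_self_imp_mem_range ψ.toRingHom hψ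
    (MonoidAlgebra.single a 1)

end Representation

open SemidirectProduct in
/-- Let `A` be a finitely generated abelian group (written
multiplicatively), `W` a finite group acting on `A`, and `G = A ⋊ W` the semidirect
product.  Then every irreducible complex representation of `G` is finite-dimensional,
of dimension at most `|W|`. -/
theorem irreducible_rep_of_semidirect_finiteDimensional
    (A : Type) [CommGroup A] (hA : Group.FG A)
    (W : Type) [Group W] [Finite W] (φ : W →* MulAut A)
    (V : Type) [AddCommGroup V] [Module ℂ V] [Nontrivial V]
    (ρ : Representation ℂ (SemidirectProduct A W φ) V)
    (hirr : ∀ p : Submodule ℂ V,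
      (∀ g : SemidirectProduct A W φ, p.map (ρ g) ≤ p) → p = ⊥ ∨ p = ⊤) :
    FiniteDimensional ℂ V ∧ Module.finrank ℂ V ≤ Nat.card W := by
  have := ρ.isIrreducible_of_forall_eq_bot_or_eq_top hirr
  have : Uncountable ℂ := Complex.ofReal_injective.uncountable
  have : Countable A := Group.countable_of_fg
  have : Countable (A ⋊[φ] W) := equivProd.injective.countable
  obtain ⟨v, hv, hvA⟩ :=
    Representation.exists_ne_zero_forall_apply_eq_smul (ρ.comp inl) ρ.isIntegral_apply_inl
  have hindex : (inl : A →* A ⋊[φ] W).range.index = Nat.card W := by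
    rw [range_inl_eq_ker_rightHom, Subgroup.index_ker,
      MonoidHom.range_eq_top.mpr rightHom_surjective, Subgroup.card_top]
  have : (inl : A →* A ⋊[φ] W).range.FiniteIndex := ⟨hindex ▸ Nat.card_pos.ne'⟩
  rw [← hindex]
  exact Representation.IsIrreducible.finiteDimensional_and_finrank_le_index hv
    (by rintro _ ⟨a, rfl⟩; exact hvA a)
end

section
/- Let A be an abelian group of finite index n in a group G, and let V be a finite-dimensional irreducible complex representation of G. Then the restriction of V to A decomposes as a direct sum of characters (one-dimensional A-subrepresentations), and dim V ≤ n. -/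
/-!
The normal core `N` of `A` is abelian, normal and of finite index. `G` permutes the weight spaces
of `N`, and a common eigenvector of `N` exists, so by irreducibility these weight spaces span `V`:
every element of `N` acts diagonalisably. Every `g ∈ G` has a power in `N`, and an invertible
endomorphism of a complex space with a diagonalisable power is diagonalisable; hence the commuting
family `ρ a`, `a ∈ A`, is simultaneously diagonalisable, which splits `V` into `A`-stable lines.
The translates of a weight vector of `A` by coset representatives of `A` span a nonzero
`G`-stable subspace, which is therefore `V`, so `dim V ≤ [G : A]`.
-/

open Module Module.End Polynomial

universe u

namespace Module.End

theorem exists_iInf_eigenspace_ne_bot_of_commute {K W ι : Type*} [Field K] [IsAlgClosed K]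
    [AddCommGroup W] [Module K W] [FiniteDimensional K W] [Nontrivial W] (f : ι → End K W)
    (hf : ∀ i j, Commute (f i) (f j)) : ∃ χ : ι → K, ⨅ i, eigenspace (f i) (χ i) ≠ ⊥ := by
  by_cases hscalar : ∀ i, ∃ μ, eigenspace (f i) μ = ⊤
  · choose χ hχ using hscalar
    exact ⟨χ, by simp [hχ]⟩
  push Not at hscalar
  obtain ⟨i, hi⟩ := hscalar
  obtain ⟨μ, hμ⟩ := exists_eigenvalue (f i)
  set E := eigenspace (f i) μ
  have hE (j : ι) : ∀ x ∈ E, f j x ∈ E := fun _ hx ↦ mapsTo_genEigenspace_of_comm (hf i j) μ 1 hx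
  have : Nontrivial E := Submodule.nontrivial_iff_ne_bot.mpr hμ
  have hdim : finrank K E < finrank K W := Submodule.finrank_lt (hi μ)
  obtain ⟨χ, hχ⟩ := exists_iInf_eigenspace_ne_bot_of_commute (fun j ↦ (f j).restrict (hE j))
    fun j l ↦ LinearMap.restrict_commute (hf j l) _ _
  obtain ⟨v, hv, hv0⟩ := Submodule.exists_mem_ne_zero_of_ne_bot hχ
  refine ⟨χ, (Submodule.ne_bot_iff _).mpr ⟨v, (Submodule.mem_iInf _).mpr fun j ↦ ?_, by simpa⟩⟩
  exact eigenspace_restrict_le_eigenspace _ (hE j) _ ⟨v, (Submodule.mem_iInf _).mp hv j, rfl⟩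
termination_by finrank K W

variable {K W : Type*} [Field K] [AddCommGroup W] [Module K W]

theorem iSupIndep_iInf_eigenspace_of_commute {ι : Type*} (f : ι → End K W)
    (hf : ∀ i j, Commute (f i) (f j)) :
    iSupIndep fun χ : ι → K ↦ ⨅ i, eigenspace (f i) (χ i) :=
  (independent_iInf_maxGenEigenspace_of_forall_mapsTo f
    fun i j φ ↦ mapsTo_maxGenEigenspace_of_comm (hf j i) φ).mono
    fun _ ↦ iInf_mono fun _ ↦ eigenspace_le_maxGenEigenspace

variable [FiniteDimensional K W]

theorem isSemisimple_of_iSup_eigenspace_eq_top {f : End K W}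
    (h : ⨆ μ, eigenspace f μ = ⊤) : IsSemisimple f := by
  classical
  let p : K[X] := ∏ μ ∈ (minpoly K f).roots.toFinset, (X - C μ)
  refine isSemisimple_of_squarefree_aeval_eq_zero
    (separable_prod_X_sub_C_iff'.mpr fun _ _ _ _ ↦ id).squarefree (p := p) ?_
  rw [← LinearMap.ker_eq_top, eq_top_iff, ← h, iSup_le_iff]
  intro μ v hv
  rw [LinearMap.mem_ker, aeval_apply_of_mem_apply_eq_smul (mem_eigenspace_iff.mp hv)]
  rcases eq_or_ne v 0 with rfl | hv0
  · exact smul_zero _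
  · have hμ : μ ∈ (minpoly K f).roots.toFinset := by
      rw [Multiset.mem_toFinset, mem_roots (minpoly.ne_zero (Algebra.IsIntegral.isIntegral f))]
      exact isRoot_of_hasEigenvalue (hasEigenvalue_of_hasEigenvector ⟨hv, hv0⟩)
    rw [eval_prod, Finset.prod_eq_zero hμ (by simp), zero_smul]

variable [IsAlgClosed K]

theorem iSup_iInf_eigenspace_eq_top_of_commute {ι : Type*} (f : ι → End K W)
    (hf : ∀ i j, Commute (f i) (f j)) (hss : ∀ i, IsSemisimple (f i)) :
    ⨆ χ : ι → K, ⨅ i, eigenspace (f i) (χ i) = ⊤ := by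
  simpa only [(hss _).isFinitelySemisimple.maxGenEigenspace_eq_eigenspace] using
    iSup_iInf_maxGenEigenspace_eq_top_of_iSup_maxGenEigenspace_eq_top_of_commute f
      (fun i j _ ↦ hf i j) fun i ↦ iSup_maxGenEigenspace_eq_top (f i)

theorem eigenspace_pow_le_iSup_eigenspace (f : End K W) {k : ℕ} (hk : (k : K) ≠ 0) {μ : K}
    (hμ : μ ≠ 0) : eigenspace (f ^ k) μ ≤ ⨆ ν, eigenspace f ν := by
  set E := eigenspace (f ^ k) μ
  have hE : ∀ x ∈ E, f x ∈ E := fun _ hx ↦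
    mapsTo_genEigenspace_of_comm ((Commute.refl f).pow_left k) μ 1 hx
  -- on `E`, `f` is a root of the separable polynomial `X ^ k - μ`
  have hss : IsSemisimple (f.restrict hE) := by
    refine isSemisimple_of_squarefree_aeval_eq_zero
      (separable_X_pow_sub_C μ hk hμ).squarefree ?_
    ext ⟨v, hv⟩
    rw [mem_eigenspace_iff] at hv
    simp [pow_restrict k hE, hv, Module.algebraMap_end_apply]
  calc E = (⊤ : Submodule K E).map E.subtype := by simp
    _ = ⨆ ν, (eigenspace (f.restrict hE) ν).map E.subtype := by
      rw [← hss.iSup_eigenspace_eq_top, Submodule.map_iSup]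
    _ ≤ ⨆ ν, eigenspace f ν := iSup_mono fun ν ↦ eigenspace_restrict_le_eigenspace f hE ν

theorem IsSemisimple.of_pow {f : End K W} (hf : Function.Injective f) {k : ℕ}
    (hk : (k : K) ≠ 0) (h : IsSemisimple (f ^ k)) : IsSemisimple f := by
  refine isSemisimple_of_iSup_eigenspace_eq_top (eq_top_iff.mpr ?_)
  rw [← h.iSup_eigenspace_eq_top, iSup_le_iff]
  intro μ
  rcases eq_or_ne μ 0 with rfl | hμ
  · rw [eigenspace_zero, LinearMap.ker_eq_bot.mpr (by rw [coe_pow]; exact hf.iterate k)]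
    exact bot_le
  · exact eigenspace_pow_le_iSup_eigenspace f hk hμ

end Module.End

theorem Submodule.exists_finrank_eq_one_of_iSupIndep {K : Type*} {W κ : Type u} [Field K]
    [AddCommGroup W] [Module K W] {P : κ → Submodule K W} (hind : iSupIndep P)
    (hsup : iSup P = ⊤) :
    ∃ (ι : Type u) (L : ι → Submodule K W), iSupIndep L ∧ iSup L = ⊤ ∧
      ∀ i, finrank K (L i) = 1 ∧ ∃ j, L i ≤ P j := by
  classical
  have hint := DirectSum.isInternal_submodule_of_iSupIndep_of_iSup_eq_top hind hsup
  let B := hint.collectedBasis fun j ↦ Basis.ofVectorSpace K (P j)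
  refine ⟨_, fun i ↦ K ∙ B i, B.linearIndependent.iSupIndep_span_singleton, ?_,
    fun i ↦ ⟨finrank_span_singleton (B.ne_zero i), i.1, ?_⟩⟩
  · rw [← Submodule.span_range_eq_iSup, B.span_eq]
  · exact (Submodule.span_singleton_le_iff_mem _ _).mpr (hint.collectedBasis_mem _ i)

namespace Representation

variable {k G V : Type*} [Group G] [AddCommGroup V]

section CommRing

variable [CommRing k] [Module k V] (ρ : Representation k G V)

def weightSpace (H : Subgroup G) (χ : H → k) : Submodule k V :=
  ⨅ h : H, eigenspace (ρ h) (χ h)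

variable {ρ} {H : Subgroup G} {χ : H → k}

theorem mem_weightSpace {v : V} : v ∈ weightSpace ρ H χ ↔ ∀ h : H, ρ h v = χ h • v := by
  simp [weightSpace]

theorem map_le_of_le_weightSpace {L : Submodule k V} (hL : L ≤ weightSpace ρ H χ) (h : H) :
    L.map (ρ h) ≤ L := by
  rintro _ ⟨v, hv, rfl⟩
  rw [mem_weightSpace.mp (hL hv) h]
  exact L.smul_mem _ hv

theorem map_weightSpace_le (hH : H.Normal) (g : G) :
    (weightSpace ρ H χ).map (ρ g) ≤
      weightSpace ρ H fun h ↦ χ ⟨g⁻¹ * h * g, hH.conj_mem' _ h.2 g⟩ := by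
  rintro _ ⟨v, hv, rfl⟩
  refine mem_weightSpace.mpr fun h ↦ ?_
  calc ρ h (ρ g v) = ρ g (ρ (g⁻¹ * h * g) v) := by
        simp only [← Module.End.mul_apply, ← map_mul, mul_assoc, mul_inv_cancel_left]
    _ = _ := by rw [mem_weightSpace.mp hv ⟨_, _⟩, map_smul]

end CommRing

section Field

variable [Field k] [Module k V] {ρ : Representation k G V}
  (hirr : ∀ p : Submodule k V, (∀ g : G, p.map (ρ g) ≤ p) → p = ⊥ ∨ p = ⊤)
include hirr

theorem finrank_le_index_of_mem_weightSpace {A : Subgroup G} [A.FiniteIndex] {χ : A → k}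
    {w : V} (hw : w ∈ weightSpace ρ A χ) (hw0 : w ≠ 0) : finrank k V ≤ A.index := by
  let b : G ⧸ A → V := fun q ↦ ρ q.out w
  set U := Submodule.span k (Set.range b)
  have hstab (g : G) : U.map (ρ g) ≤ U := by
    rw [Submodule.map_span_le]
    rintro _ ⟨q, rfl⟩
    obtain ⟨a, ha⟩ := QuotientGroup.mk_out_eq_mul A (g * q.out)
    have : ρ g (b q) = χ a⁻¹ • b (g * q.out) := by
      rw [← map_smul, ← mem_weightSpace.mp hw a⁻¹]
      simp only [b, ha, ← Module.End.mul_apply, ← map_mul, Subgroup.coe_inv, mul_inv_cancel_right]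
    rw [this]
    exact U.smul_mem _ (Submodule.subset_span ⟨_, rfl⟩)
  have hne : U ≠ ⊥ := (Submodule.ne_bot_iff _).mpr ⟨b (QuotientGroup.mk 1),
    Submodule.subset_span ⟨_, rfl⟩, (map_ne_zero_iff _ (ρ.apply_bijective _).injective).mpr hw0⟩
  have := Fintype.ofFinite (G ⧸ A)
  calc finrank k V = finrank k U := by rw [(hirr U hstab).resolve_left hne, finrank_top]
    _ ≤ Fintype.card (G ⧸ A) := finrank_range_le_card b
    _ = A.index := by rw [A.index_eq_card, Nat.card_eq_fintype_card]

variable [IsAlgClosed k] [FiniteDimensional k V] [Nontrivial V] {H : Subgroup G}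
  (hH : ∀ a ∈ H, ∀ b ∈ H, a * b = b * a)
include hH

theorem iSup_weightSpace_eq_top (hHn : H.Normal) : ⨆ χ, weightSpace ρ H χ = ⊤ := by
  refine (hirr _ fun g ↦ ?_).resolve_left ?_
  · rw [Submodule.map_iSup]
    exact iSup_le fun χ ↦ (map_weightSpace_le hHn g).trans (le_iSup _ _)
  · obtain ⟨χ, hχ⟩ := exists_iInf_eigenspace_ne_bot_of_commute (fun h : H ↦ ρ h)
      fun a b ↦ Commute.map (hH a a.2 b b.2 : Commute (a : G) b) ρ
    exact ne_bot_of_le_ne_bot hχ (le_iSup (weightSpace ρ H) χ)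

theorem isSemisimple_of_mem_normal (hHn : H.Normal) {h : G} (hh : h ∈ H) :
    IsSemisimple (ρ h) := by
  refine isSemisimple_of_iSup_eigenspace_eq_top (eq_top_iff.mpr ?_)
  rw [← iSup_weightSpace_eq_top hirr hH hHn]
  exact iSup_mono' fun χ ↦ ⟨χ ⟨h, hh⟩, iInf_le _ (⟨h, hh⟩ : H)⟩

theorem isSemisimple_apply [CharZero k] [H.FiniteIndex] (g : G) : IsSemisimple (ρ g) := by
  have hN := H.normalCore_le
  have hpow : IsSemisimple (ρ g ^ H.normalCore.index) := by
    rw [← map_pow]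
    exact isSemisimple_of_mem_normal hirr (fun x hx y hy ↦ hH x (hN hx) y (hN hy))
      H.normalCore_normal (H.normalCore.pow_index_mem g)
  exact hpow.of_pow (ρ.apply_bijective g).injective
    (Nat.cast_ne_zero.mpr Subgroup.FiniteIndex.index_ne_zero)

end Field

end Representation

open Representation in
/-- Let `A` be an abelian subgroup of finite index `n` in a group
`G`, and `V` a finite-dimensional irreducible complex representation of `G`.  Then the
restriction of `V` to `A` decomposes as a direct sum of one-dimensional
`A`-subrepresentations, and `dim V ≤ n`. -/
theorem irreducible_rep_of_abelian_finite_index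
    (G : Type) [Group G] (A : Subgroup G)
    (hab : ∀ a ∈ A, ∀ b ∈ A, a * b = b * a)
    (n : ℕ) (hn : A.index = n) (hnpos : n ≠ 0)
    (V : Type) [AddCommGroup V] [Module ℂ V] [FiniteDimensional ℂ V] [Nontrivial V]
    (ρ : Representation ℂ G V)
    (hirr : ∀ p : Submodule ℂ V, (∀ g : G, p.map (ρ g) ≤ p) → p = ⊥ ∨ p = ⊤) :
    (∃ (ι : Type) (f : ι → Submodule ℂ V),
      iSupIndep f ∧ iSup f = ⊤ ∧
      ∀ i, Module.finrank ℂ (f i) = 1 ∧ ∀ a ∈ A, (f i).map (ρ a) ≤ f i) ∧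
    Module.finrank ℂ V ≤ n := by
  have : A.FiniteIndex := ⟨hn ▸ hnpos⟩
  have hcomm (a b : A) : Commute (ρ a) (ρ b) :=
    Commute.map (hab a a.2 b b.2 : Commute (a : G) b) ρ
  obtain ⟨ι, L, hind, hsup, hL⟩ := Submodule.exists_finrank_eq_one_of_iSupIndep
    (iSupIndep_iInf_eigenspace_of_commute _ hcomm)
    (iSup_iInf_eigenspace_eq_top_of_commute _ hcomm fun a ↦ isSemisimple_apply hirr hab a)
  refine ⟨⟨ι, L, hind, hsup, fun i ↦ ⟨(hL i).1, fun a ha ↦ ?_⟩⟩, ?_⟩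
  · obtain ⟨χ, hχ⟩ := (hL i).2
    exact map_le_of_le_weightSpace (ρ := ρ) hχ ⟨a, ha⟩
  · obtain ⟨χ, hχ⟩ := exists_iInf_eigenspace_ne_bot_of_commute _ hcomm
    obtain ⟨w, hw, hw0⟩ := Submodule.exists_mem_ne_zero_of_ne_bot hχ
    exact hn ▸ finrank_le_index_of_mem_weightSpace hirr (χ := χ) hw hw0
end
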